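/- For α ∈ (0,2), the integral ∫₀¹ log(1-u²) / u^{1+α} du equals (1/α)(γ + ψ(1 - α/2)). -/

import Mathlib

/-!
Since `log Γ` is convex with `ψ = (log Γ)'`, the digamma function is increasing on `(0, ∞)`;
together with `ψ(x + 1) = ψ(x) + 1/x` and `ψ(n + 1) = -γ + H_n` this squeezes the partial sums
of `∑ (1/(x + n) - 1/(n + 1))` towards `-(γ + ψ(x))` for `0 < x ≤ 1`. On the other side, expanding
`-log(1 - u²) = ∑ u^(2n+2)/(n + 1)` and integrating termwise gives
`-∫₀¹ log(1 - u²) u^(-1-α) du = ∑ 1/((n + 1)(2n + 2 - α))`. For `x = 1 - α/2` the two series agree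
up to the factor `α`.
-/

open Real MeasureTheory Set Filter Topology

/-- The digamma function `ψ(z) = Γ'(z) / Γ(z)`. -/
noncomputable def digamma (x : ℝ) : ℝ := deriv Real.Gamma x / Real.Gamma x

section Digamma

variable {x : ℝ}

lemma differentiableAt_Gamma_of_pos (hx : 0 < x) : DifferentiableAt ℝ Gamma x :=
  differentiableAt_Gamma fun m => ((neg_nonpos.2 m.cast_nonneg).trans_lt hx).ne'

lemma differentiableAt_log_Gamma (hx : 0 < x) : DifferentiableAt ℝ (log ∘ Gamma) x :=
  (differentiableAt_Gamma_of_pos hx).log (Gamma_pos_of_pos hx).ne'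

lemma digamma_eq_deriv_log_Gamma (hx : 0 < x) : digamma x = deriv (log ∘ Gamma) x := by
  rw [digamma, Function.comp_def,
    deriv.log (differentiableAt_Gamma_of_pos hx) (Gamma_pos_of_pos hx).ne']

lemma digamma_add_one (hx : 0 < x) : digamma (x + 1) = digamma x + x⁻¹ := by
  rw [digamma_eq_deriv_log_Gamma (by positivity), digamma_eq_deriv_log_Gamma hx,
    ← deriv_comp_add_const, ← deriv_log,
    ← deriv_add (differentiableAt_log_Gamma hx) (differentiableAt_log hx.ne')]
  apply EventuallyEq.deriv_eq
  filter_upwards [eventually_gt_nhds hx] with t ht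
  simp only [Function.comp_apply, Pi.add_apply, Gamma_add_one ht.ne',
    log_mul ht.ne' (Gamma_pos_of_pos ht).ne', add_comm]

lemma digamma_add_nat (hx : 0 < x) (n : ℕ) :
    digamma (x + n) = digamma x + ∑ k ∈ Finset.range n, (x + k)⁻¹ := by
  induction n with
  | zero => simp
  | succ n ih =>
    rw [Nat.cast_succ, ← add_assoc, digamma_add_one (by positivity), ih, Finset.sum_range_succ,
      add_assoc]

lemma digamma_nat_add_one (n : ℕ) : digamma (n + 1) = -eulerMascheroniConstant + harmonic n := by
  rw [digamma, deriv_Gamma_nat, Gamma_nat_eq_factorial, mul_div_cancel_left₀ _ (by positivity)]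

lemma monotoneOn_digamma : MonotoneOn digamma (Ioi 0) := fun a ha b hb hab => by
  rw [digamma_eq_deriv_log_Gamma ha, digamma_eq_deriv_log_Gamma hb]
  exact convexOn_log_Gamma.monotoneOn_deriv (fun y hy => differentiableAt_log_Gamma hy) ha hb hab

/-- `ψ(x + n) ≤ ψ(n + 1) ≤ ψ(x + n + 1) = ψ(x + n) + 1/(x + n)`. -/
lemma tendsto_digamma_nat_add_one_sub_digamma_add_nat (hx₀ : 0 < x) (hx₁ : x ≤ 1) :
    Tendsto (fun n : ℕ => digamma (n + 1) - digamma (x + n)) atTop (𝓝 0) := by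
  have hlim : Tendsto (fun n : ℕ => (x + n)⁻¹) atTop (𝓝 0) :=
    (tendsto_atTop_add_const_left _ x tendsto_natCast_atTop_atTop).inv_tendsto_atTop
  refine squeeze_zero (fun n => sub_nonneg.2 ?_) (fun n => ?_) hlim
  · exact monotoneOn_digamma (mem_Ioi.2 (by positivity)) (mem_Ioi.2 (by positivity))
      (by linarith)
  · rw [sub_le_iff_le_add', ← digamma_add_one (by positivity)]
    exact monotoneOn_digamma (mem_Ioi.2 (by positivity)) (mem_Ioi.2 (by positivity))
      (by linarith)

theorem hasSum_digamma (hx₀ : 0 < x) (hx₁ : x ≤ 1) :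
    HasSum (fun n : ℕ => (x + n)⁻¹ - ((n : ℝ) + 1)⁻¹)
      (-(eulerMascheroniConstant + digamma x)) := by
  have hnonneg (n : ℕ) : 0 ≤ (x + n)⁻¹ - ((n : ℝ) + 1)⁻¹ :=
    sub_nonneg.2 (inv_anti₀ (by positivity) (by linarith))
  have hpartial (n : ℕ) : ∑ k ∈ Finset.range n, ((x + k)⁻¹ - ((k : ℝ) + 1)⁻¹) =
      -(eulerMascheroniConstant + digamma x) - (digamma (n + 1) - digamma (x + n)) := by
    rw [Finset.sum_sub_distrib, digamma_add_nat hx₀, digamma_nat_add_one, harmonic]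
    push_cast
    ring
  rw [hasSum_iff_tendsto_nat_of_nonneg hnonneg, funext hpartial]
  simpa using (tendsto_digamma_nat_add_one_sub_digamma_add_nat hx₀ hx₁).const_sub
    (-(eulerMascheroniConstant + digamma x))

end Digamma

section Integral

variable {α : ℝ}

lemma integrableOn_rpow_Ioo_zero_one {r : ℝ} (hr : -1 < r) :
    IntegrableOn (fun u : ℝ => u ^ r) (Ioo 0 1) :=
  (intervalIntegrable_iff_integrableOn_Ioo_of_le zero_le_one).1
    (intervalIntegral.intervalIntegrable_rpow' hr)

lemma integral_rpow_Ioo_zero_one {r : ℝ} (hr : -1 < r) :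
    ∫ u in Ioo (0 : ℝ) 1, u ^ r = (r + 1)⁻¹ := by
  rw [← integral_Ioc_eq_integral_Ioo, ← intervalIntegral.integral_of_le zero_le_one,
    integral_rpow (Or.inl hr), one_rpow, zero_rpow (by linarith), sub_zero, one_div]

lemma hasSum_rpow_div_eq_neg_log_one_sub_sq_div_rpow {u : ℝ} (hu : u ∈ Ioo (0 : ℝ) 1) (α : ℝ) :
    HasSum (fun n : ℕ => u ^ (2 * (n : ℝ) + 1 - α) / (n + 1))
      (-(log (1 - u ^ 2) / u ^ (1 + α))) := by
  have hu2 : |u ^ 2| < 1 := by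
    rw [abs_of_nonneg (by positivity)]
    nlinarith [hu.1, hu.2]
  have hterm (n : ℕ) :
      (u ^ 2) ^ (n + 1) / (n + 1) / u ^ (1 + α) = u ^ (2 * (n : ℝ) + 1 - α) / (n + 1) := by
    rw [div_right_comm, ← pow_mul, ← rpow_natCast, ← rpow_sub hu.1]
    push_cast
    ring_nf
  simpa only [hterm, neg_div] using
    (hasSum_pow_div_log_of_abs_lt_one hu2).div_const (u ^ (1 + α))

lemma summable_inv_mul_two_mul_add_two_sub (hα : α < 2) :
    Summable fun n : ℕ => (((n : ℝ) + 1) * (2 * n + 2 - α))⁻¹ := by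
  refine Summable.of_norm_bounded_eventually_nat (g := fun n : ℕ => (((n : ℝ) + 1) ^ 2)⁻¹)
    ((summable_nat_add_iff 1).2 (summable_nat_pow_inv.2 one_lt_two) |>.congr fun n => by
      push_cast; rfl) ?_
  filter_upwards [eventually_ge_atTop 1] with n hn
  have hn' : (1 : ℝ) ≤ n := by exact_mod_cast hn
  rw [norm_inv, norm_of_nonneg (by nlinarith), sq]
  exact inv_anti₀ (by positivity) (by nlinarith)

theorem hasSum_neg_integral_log_one_sub_sq_div_rpow (hα : α < 2) :
    HasSum (fun n : ℕ => (((n : ℝ) + 1) * (2 * n + 2 - α))⁻¹)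
      (-∫ u in Ioo (0 : ℝ) 1, log (1 - u ^ 2) / u ^ (1 + α)) := by
  set F : ℕ → ℝ → ℝ := fun n u => u ^ (2 * (n : ℝ) + 1 - α) / (n + 1)
  have hexp (n : ℕ) : -1 < 2 * (n : ℝ) + 1 - α := by linarith [n.cast_nonneg (α := ℝ)]
  have hint (n : ℕ) : IntegrableOn (F n) (Ioo 0 1) :=
    (integrableOn_rpow_Ioo_zero_one (hexp n)).div_const _
  have hval (n : ℕ) : ∫ u in Ioo (0 : ℝ) 1, F n u = (((n : ℝ) + 1) * (2 * n + 2 - α))⁻¹ := by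
    rw [integral_div, integral_rpow_Ioo_zero_one (hexp n), div_eq_mul_inv, ← mul_inv, mul_comm]
    ring_nf
  have hnorm (n : ℕ) : ∫ u in Ioo (0 : ℝ) 1, ‖F n u‖ = ∫ u in Ioo (0 : ℝ) 1, F n u :=
    setIntegral_congr_fun measurableSet_Ioo fun u hu =>
      norm_of_nonneg (div_nonneg (rpow_nonneg hu.1.le _) (by positivity))
  have hsum := hasSum_integral_of_summable_integral_norm hint <| by
    simpa only [hnorm, hval] using summable_inv_mul_two_mul_add_two_sub hα
  rw [← integral_neg, setIntegral_congr_fun measurableSet_Ioo fun u hu =>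
    (hasSum_rpow_div_eq_neg_log_one_sub_sq_div_rpow hu α).tsum_eq.symm]
  simpa only [hval] using hsum

end Integral

theorem stmt_4 (α : ℝ) (hα₁ : 0 < α) (hα₂ : α < 2) :
    ∫ u in Ioo (0 : ℝ) 1, Real.log (1 - u ^ 2) / u ^ (1 + α) =
      (1 / α) * (Real.eulerMascheroniConstant + digamma (1 - α / 2)) := by
  have hψ := hasSum_digamma (x := 1 - α / 2) (by linarith) (by linarith)
  have hI := (hasSum_neg_integral_log_one_sub_sq_div_rpow hα₂).mul_left α
  have hterm (n : ℕ) :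
      α * (((n : ℝ) + 1) * (2 * n + 2 - α))⁻¹ = (1 - α / 2 + n)⁻¹ - ((n : ℝ) + 1)⁻¹ := by
    have : (0 : ℝ) < 2 * n + 2 - α := by linarith [n.cast_nonneg (α := ℝ)]
    rw [show 1 - α / 2 + (n : ℝ) = (2 * n + 2 - α) / 2 by ring, inv_div, ← div_eq_mul_inv,
      ← one_div, div_sub_div _ _ this.ne' (by positivity),
      div_eq_div_iff (by positivity) (by positivity)]
    ring
  simp only [hterm] at hI
  have := hI.unique hψ
  rw [one_div, eq_inv_mul_iff_mul_eq₀ hα₁.ne']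
  linarith
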